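/- Let R be a commutative ring and let f ∈ R be a non-zero-divisor. Define on Der(R) the bracket [X,Y]_f := f•⁅X,Y⁆ + (X f)•Y − (Y f)•X. Then [·,·]_f satisfies the Jacobi identity: for all derivations X, Y, Z, [X,[Y,Z]_f]_f + [Y,[Z,X]_f]_f + [Z,[X,Y]_f]_f = 0. -/
import Mathlib


/-- The deformed bracket `[X,Y]_f := f•⁅X,Y⁆ + (X f)•Y − (Y f)•X` on derivations. -/
def deformedBracket {R : Type*} [CommRing R] (f : R) (X Y : Derivation ℤ R R) :
    Derivation ℤ R R :=
  f • ⁅X, Y⁆ + (X f) • Y - (Y f) • X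

theorem deformedBracket_jacobi {R : Type*} [CommRing R] (f : R)
    (hf : f ∈ nonZeroDivisors R) (X Y Z : Derivation ℤ R R) :
    deformedBracket f X (deformedBracket f Y Z)
      + deformedBracket f Y (deformedBracket f Z X)
      + deformedBracket f Z (deformedBracket f X Y) = 0 := by
  ext g
  simp only [deformedBracket, Derivation.add_apply, Derivation.sub_apply,
    Derivation.smul_apply, Derivation.commutator_apply, map_add, map_sub,
    map_smul, smul_eq_mul, Derivation.leibniz, Derivation.zero_apply]
  ring
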